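/- Let A be a unital ring and let p₁, p₂ ∈ M_n(A) be idempotents such that the right A-modules p₁A^n and p₂A^n are isomorphic. Then there exists an invertible matrix U ∈ M_{2n}(A) such that the block-diagonal matrix diag(p₁, 0_n) ∈ M_{2n}(A) equals U · diag(p₂, 0_n) · U⁻¹. -/
import Mathlib

/-- The right `A`-module `p A^n` (the image of the action of the matrix `p` on column
vectors), as a submodule of `A^n` viewed as a right `A`-module (i.e. an `Aᵐᵒᵖ`-module). -/
def Matrix.rangeSubmodule {A : Type*} [Ring A] {n : ℕ} (p : Matrix (Fin n) (Fin n) A) :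
    Submodule Aᵐᵒᵖ (Fin n → A) where
  carrier := Set.range p.mulVec
  add_mem' := by rintro _ _ ⟨x, rfl⟩ ⟨y, rfl⟩; exact ⟨x + y, Matrix.mulVec_add p x y⟩
  zero_mem' := ⟨0, by simp⟩
  smul_mem' := by rintro c _ ⟨x, rfl⟩; exact ⟨c • x, Matrix.mulVec_smul p c x⟩

section Aux

open MulOpposite

variable {A : Type*} [Ring A] {n : ℕ}

/-- `mulVec` as an `Aᵐᵒᵖ`-linear endomorphism of `A^n`. -/
private def mulVecLinop (p : Matrix (Fin n) (Fin n) A) :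
    (Fin n → A) →ₗ[Aᵐᵒᵖ] (Fin n → A) where
  toFun := p.mulVec
  map_add' := p.mulVec_add
  map_smul' := p.mulVec_smul

private lemma matOf_mulVec (T : (Fin n → A) →ₗ[Aᵐᵒᵖ] (Fin n → A)) (x : Fin n → A) :
    (Matrix.of fun i j => T (Pi.single j 1) i).mulVec x = T x := by
  have hx : x = ∑ j, (op (x j)) • Pi.single j (1 : A) := by
    funext i
    simp [Finset.sum_apply, op_smul_eq_mul, Pi.single_apply]
  conv_rhs => rw [hx, map_sum]
  funext i
  simp [Matrix.mulVec, dotProduct, Finset.sum_apply, op_smul_eq_mul]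

private lemma mat_ext {M N : Matrix (Fin n) (Fin n) A}
    (h : ∀ x, M.mulVec x = N.mulVec x) : M = N := by
  ext i j
  have := congrFun (h (Pi.single j 1)) i
  simpa using this

private lemma mem_rangeSubmodule (p : Matrix (Fin n) (Fin n) A) (x : Fin n → A) :
    p.mulVec x ∈ p.rangeSubmodule := ⟨x, rfl⟩

private lemma idem_fix {p : Matrix (Fin n) (Fin n) A} (hp : p * p = p)
    {x : Fin n → A} (hx : x ∈ p.rangeSubmodule) : p.mulVec x = x := by
  obtain ⟨y, rfl⟩ := hx
  rw [Matrix.mulVec_mulVec, hp]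

end Aux

/-- If `p₁, p₂ ∈ M_n(A)` are idempotents over a unital ring `A` whose
associated right modules `p₁A^n` and `p₂A^n` are isomorphic, then `diag(p₁,0)` and
`diag(p₂,0)` are conjugate by an invertible element of `M_{2n}(A)`. -/
theorem stmt_5 {A : Type*} [Ring A] {n : ℕ}
    (p₁ p₂ : Matrix (Fin n) (Fin n) A)
    (h₁ : p₁ * p₁ = p₁) (h₂ : p₂ * p₂ = p₂)
    (hiso : Nonempty (p₁.rangeSubmodule ≃ₗ[Aᵐᵒᵖ] p₂.rangeSubmodule)) :
    ∃ U V : Matrix (Fin n ⊕ Fin n) (Fin n ⊕ Fin n) A,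
      U * V = 1 ∧ V * U = 1 ∧
      Matrix.fromBlocks p₁ 0 0 0 = U * Matrix.fromBlocks p₂ 0 0 0 * V := by
  obtain ⟨φ⟩ := hiso
  -- the induced linear endomorphisms of A^n
  set Fhom : (Fin n → A) →ₗ[Aᵐᵒᵖ] (Fin n → A) :=
    p₂.rangeSubmodule.subtype ∘ₗ φ.toLinearMap ∘ₗ
      (mulVecLinop p₁).codRestrict p₁.rangeSubmodule (fun x => ⟨x, rfl⟩) with hF
  set Ghom : (Fin n → A) →ₗ[Aᵐᵒᵖ] (Fin n → A) :=
    p₁.rangeSubmodule.subtype ∘ₗ φ.symm.toLinearMap ∘ₗ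
      (mulVecLinop p₂).codRestrict p₂.rangeSubmodule (fun x => ⟨x, rfl⟩) with hG
  have hFval : ∀ x, Fhom x = (φ ⟨p₁.mulVec x, ⟨x, rfl⟩⟩ : p₂.rangeSubmodule).val := fun x => rfl
  have hGval : ∀ x, Ghom x = (φ.symm ⟨p₂.mulVec x, ⟨x, rfl⟩⟩ : p₁.rangeSubmodule).val :=
    fun x => rfl
  have hFmem : ∀ x, Fhom x ∈ p₂.rangeSubmodule := fun x => (φ _).2
  have hGmem : ∀ x, Ghom x ∈ p₁.rangeSubmodule := fun x => (φ.symm _).2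
  -- the matrices
  set f : Matrix (Fin n) (Fin n) A := Matrix.of fun i j => Fhom (Pi.single j 1) i with hfdef
  set g : Matrix (Fin n) (Fin n) A := Matrix.of fun i j => Ghom (Pi.single j 1) i with hgdef
  have hfmv : ∀ x, f.mulVec x = Fhom x := matOf_mulVec Fhom
  have hgmv : ∀ x, g.mulVec x = Ghom x := matOf_mulVec Ghom
  -- the six relations
  have hfg : f * g = p₂ := by
    apply mat_ext; intro x
    rw [← Matrix.mulVec_mulVec, hgmv, hfmv, hFval]
    have : (⟨p₁.mulVec (Ghom x), ⟨_, rfl⟩⟩ : p₁.rangeSubmodule)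
        = φ.symm ⟨p₂.mulVec x, ⟨x, rfl⟩⟩ := by
      apply Subtype.ext
      rw [hGval]
      exact idem_fix h₁ (φ.symm _).2
    rw [this, φ.apply_symm_apply]
  have hgf : g * f = p₁ := by
    apply mat_ext; intro x
    rw [← Matrix.mulVec_mulVec, hfmv, hgmv, hGval]
    have : (⟨p₂.mulVec (Fhom x), ⟨_, rfl⟩⟩ : p₂.rangeSubmodule)
        = φ ⟨p₁.mulVec x, ⟨x, rfl⟩⟩ := by
      apply Subtype.ext
      rw [hFval]
      exact idem_fix h₂ (φ _).2
    rw [this, φ.symm_apply_apply]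
  have hp2f : p₂ * f = f := by
    apply mat_ext; intro x
    rw [← Matrix.mulVec_mulVec, hfmv]
    exact (idem_fix h₂ (hFmem x)).trans (hfmv x).symm ▸ idem_fix h₂ (hFmem x)
  have hp1g : p₁ * g = g := by
    apply mat_ext; intro x
    rw [← Matrix.mulVec_mulVec, hgmv]
    exact idem_fix h₁ (hGmem x)
  have hfp1 : f * p₁ = f := by
    apply mat_ext; intro x
    rw [← Matrix.mulVec_mulVec, hfmv, hfmv, hFval, hFval]
    have : (⟨p₁.mulVec (p₁.mulVec x), ⟨_, rfl⟩⟩ : p₁.rangeSubmodule)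
        = ⟨p₁.mulVec x, ⟨x, rfl⟩⟩ := Subtype.ext
      (show p₁.mulVec (p₁.mulVec x) = p₁.mulVec x by rw [Matrix.mulVec_mulVec, h₁])
    rw [this]
  have hgp2 : g * p₂ = g := by
    apply mat_ext; intro x
    rw [← Matrix.mulVec_mulVec, hgmv, hgmv, hGval, hGval]
    have : (⟨p₂.mulVec (p₂.mulVec x), ⟨_, rfl⟩⟩ : p₂.rangeSubmodule)
        = ⟨p₂.mulVec x, ⟨x, rfl⟩⟩ := Subtype.ext
      (show p₂.mulVec (p₂.mulVec x) = p₂.mulVec x by rw [Matrix.mulVec_mulVec, h₂])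
    rw [this]
  -- auxiliary matrix identities
  have e1 : (1 - p₁) * (1 - p₁) = 1 - p₁ := by
    simp [mul_sub, sub_mul, h₁]
  have e2 : (1 - p₂) * (1 - p₂) = 1 - p₂ := by
    simp [mul_sub, sub_mul, h₂]
  have z1 : g * (1 - p₂) = 0 := by rw [mul_sub, mul_one, hgp2, sub_self]
  have z2 : (1 - p₁) * g = 0 := by rw [sub_mul, one_mul, hp1g, sub_self]
  have z3 : (1 - p₂) * f = 0 := by rw [sub_mul, one_mul, hp2f, sub_self]
  have z4 : f * (1 - p₁) = 0 := by rw [mul_sub, mul_one, hfp1, sub_self]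
  have z5 : (1 - p₂) * p₂ = 0 := by rw [sub_mul, one_mul, h₂, sub_self]
  have o1 : p₁ + (1 - p₁) = 1 := by abel
  have o2 : (1 - p₂) + p₂ = 1 := by abel
  have o3 : p₂ + (1 - p₂) = 1 := by abel
  have o4 : (1 - p₁) + p₁ = 1 := by abel
  refine ⟨Matrix.fromBlocks g (1 - p₁) (1 - p₂) f,
          Matrix.fromBlocks f (1 - p₂) (1 - p₁) g, ?_, ?_, ?_⟩
  · rw [Matrix.fromBlocks_multiply, hgf, e1, z1, z2, z3, z4, e2, hfg, o1, add_zero, o2, Matrix.fromBlocks_one]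
  · rw [Matrix.fromBlocks_multiply, hfg, e2, z4, z3, z2, z1, e1, hgf, o3, add_zero, o4, Matrix.fromBlocks_one]
  · rw [Matrix.fromBlocks_multiply, Matrix.fromBlocks_multiply]
    simp [hgp2, z5, hgf, z1]
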